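/- arXiv:1211.1940 — 7 statements merged into one kernel-verified Lean document; each statement's English description precedes it below -/
import Mathlib

section
/- Let ℓ ≥ 1 be an integer and set c₀ = (1/(2ℓ))·(1 − 1/(2ℓ))^{2ℓ−1}. Then for every real c ≥ c₀, the univariate real polynomial s_c(t) = 1 + t + c·t^{2ℓ} is a sum of squares of polynomials in ℝ[t]. -/
/-!
A polynomial that is nonnegative on `ℝ` is a sum of squares: subtracting its minimum value `m`
leaves a polynomial with a double root `a`, so `p = (X - a)² s + m` with `s` nonnegative of smaller
degree. It remains to see that `1 + t + c t^{2ℓ} ≥ 0`; with `n = 2ℓ`, this is Bernoulli's inequality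
`n y ≤ (n - 1) + yⁿ` at `y = (1 - 1/n) |t|`, and `c₀` is exactly the constant it produces.
-/

open Polynomial

/-- A univariate real polynomial is a sum of squares. -/
def IsSOSPoly (p : Polynomial ℝ) : Prop :=
  ∃ (m : ℕ) (q : Fin m → Polynomial ℝ), p = ∑ i, q i ^ 2

theorem IsSumSq.isSOSPoly {p : ℝ[X]} (hp : IsSumSq p) : IsSOSPoly p := by
  induction hp with
  | zero => exact ⟨0, Fin.elim0, by simp⟩
  | sq_add a _ ih =>
    obtain ⟨m, q, rfl⟩ := ih
    exact ⟨m + 1, Fin.cons a q, by simp [Fin.sum_univ_succ, sq]⟩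

theorem sq_X_sub_C_dvd_of_isLocalMin {p : ℝ[X]} {a : ℝ} (hroot : p.IsRoot a)
    (hmin : IsLocalMin (fun x ↦ p.eval x) a) : (X - C a) ^ 2 ∣ p := by
  rcases eq_or_ne p 0 with rfl | hp
  · exact dvd_zero _
  have hderiv : p.derivative.IsRoot a := by
    simpa [Polynomial.deriv] using hmin.deriv_eq_zero
  exact (le_rootMultiplicity_iff hp).1 ((one_lt_rootMultiplicity_iff_isRoot hp).2 ⟨hroot, hderiv⟩)

theorem eval_nonneg_of_sq_X_sub_C_mul {s : ℝ[X]} {a : ℝ}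
    (h : ∀ x, 0 ≤ ((X - C a) ^ 2 * s).eval x) (x : ℝ) : 0 ≤ s.eval x := by
  have hclosed : IsClosed {y | 0 ≤ s.eval y} := isClosed_le continuous_const s.continuous
  have hoff : {a}ᶜ ⊆ {y | 0 ≤ s.eval y} := fun y hy ↦ by
    have hpos : 0 < (y - a) ^ 2 := by
      have : y - a ≠ 0 := sub_ne_zero.2 hy
      positivity
    have := h y
    simp only [eval_mul, eval_pow, eval_sub, eval_X, eval_C] at this
    exact nonneg_of_mul_nonneg_right (by linarith) hpos
  exact hclosed.closure_subset_iff.2 hoff ((dense_compl_singleton a).closure_eq ▸ Set.mem_univ x)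

theorem isSumSq_of_forall_eval_nonneg {p : ℝ[X]} (hp : ∀ x, 0 ≤ p.eval x) : IsSumSq p := by
  induction h : p.natDegree using Nat.strong_induction_on generalizing p with
  | _ n ih =>
  obtain ⟨a, ha⟩ := p.exists_forall_norm_le
  have hmin : ∀ y, p.eval a ≤ p.eval y := fun y ↦ by
    simpa [abs_of_nonneg (hp a), abs_of_nonneg (hp y)] using ha y
  set m := p.eval a
  have hq_nonneg : ∀ y, 0 ≤ (p - C m).eval y := fun y ↦ by simpa using hmin y
  have hq_root : (p - C m).IsRoot a := by simp [m]
  obtain ⟨s, hs⟩ := sq_X_sub_C_dvd_of_isLocalMin hq_root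
    (Filter.Eventually.of_forall fun y ↦ by simpa [m] using hq_nonneg y)
  have hp_eq : p = (X - C a) ^ 2 * s + C (√m) * C (√m) := by
    rw [← C_mul, Real.mul_self_sqrt (hp a), ← hs, sub_add_cancel]
  rw [hp_eq]
  refine .add (.mul (IsSquare.sq _).isSumSq ?_) (.mul_self _)
  rcases eq_or_ne s 0 with rfl | hs0
  · exact .zero
  refine ih s.natDegree ?_ (eval_nonneg_of_sq_X_sub_C_mul (hs ▸ hq_nonneg)) rfl
  have := congrArg natDegree hs
  rw [natDegree_sub_C, natDegree_mul (pow_ne_zero 2 (X_sub_C_ne_zero a)) hs0,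
    natDegree_pow, natDegree_X_sub_C] at this
  omega

theorem le_one_add_mul_pow (n : ℕ) (hn : 2 ≤ n) {x : ℝ} (hx : 0 ≤ x) :
    x ≤ 1 + 1 / n * (1 - 1 / n) ^ (n - 1) * x ^ n := by
  obtain ⟨m, rfl⟩ : ∃ m, n = m + 1 := ⟨n - 1, by omega⟩
  have hm : (1 : ℝ) ≤ m := by exact_mod_cast (by omega : 1 ≤ m)
  have hlam : 1 - 1 / ((m + 1 : ℕ) : ℝ) = m / (m + 1) := by push_cast; field_simp; ring
  have hy : 0 ≤ m / (m + 1 : ℝ) * x := by positivity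
  have hbern := one_add_mul_le_pow (a := m / (m + 1 : ℝ) * x - 1) (by linarith) (m + 1)
  rw [add_sub_cancel, mul_pow, pow_succ] at hbern
  rw [Nat.add_sub_cancel, hlam]
  push_cast at hbern ⊢
  field_simp at hbern ⊢
  nlinarith

/-- For an integer `ℓ ≥ 1` and any `c ≥ c₀ = (1/(2ℓ))·(1 − 1/(2ℓ))^{2ℓ−1}`,
the univariate polynomial `s_c(t) = 1 + t + c·t^{2ℓ}` is a sum of squares. -/
theorem one_add_X_add_c_X_pow_isSOS (ℓ : ℕ) (hℓ : 1 ≤ ℓ) (c : ℝ)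
    (hc : (1 / (2 * (ℓ : ℝ))) * (1 - 1 / (2 * (ℓ : ℝ))) ^ (2 * ℓ - 1) ≤ c) :
    IsSOSPoly (1 + X + C c * X ^ (2 * ℓ)) := by
  refine (isSumSq_of_forall_eval_nonneg fun t ↦ ?_).isSOSPoly
  have hkey := le_one_add_mul_pow (2 * ℓ) (by omega) (abs_nonneg t)
  push_cast at hkey
  rw [(even_two_mul ℓ).pow_abs] at hkey
  have hpow : 0 ≤ t ^ (2 * ℓ) := (even_two_mul ℓ).pow_nonneg t
  simp only [eval_add, eval_one, eval_X, eval_mul, eval_C, eval_pow]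
  linarith [neg_abs_le t, mul_le_mul_of_nonneg_right hc hpow]
end

section
/- Let h = (h₁,…,h_{m₁}) and g = (g₁,…,g_{m₂}) be tuples of polynomials in ℝ[x₁,…,xₙ], let p, q ∈ ℝ[x], let ℓ ≥ 1 be an integer, and let c ≥ (1/(2ℓ))·(1 − 1/(2ℓ))^{2ℓ−1}. Assume p^{2ℓ} + q belongs to the ideal ⟨h⟩ and q ∈ Q(g). Then there exists an integer N > 0 such that for every ε > 0, setting φ_ε = −c·ε^{1−2ℓ}·(p^{2ℓ} + q) and θ_ε = ε + p + c·ε^{1−2ℓ}·p^{2ℓ} + c·ε^{1−2ℓ}·q, one has p + ε = φ_ε + θ_ε with φ_ε ∈ ⟨h⟩_{2N} and θ_ε ∈ Q_N(g). -/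
open MvPolynomial Pointwise

/-- A polynomial is a sum of squares. -/
def IsSOS {n : ℕ} (p : MvPolynomial (Fin n) ℝ) : Prop :=
  ∃ (m : ℕ) (q : Fin m → MvPolynomial (Fin n) ℝ), p = ∑ i, q i ^ 2

/-- The `2k`-th truncated ideal generated by the tuple `h`. -/
def truncIdeal {n m : ℕ} (h : Fin m → MvPolynomial (Fin n) ℝ) (k : ℕ) :
    Set (MvPolynomial (Fin n) ℝ) :=
  {p | ∃ φ : Fin m → MvPolynomial (Fin n) ℝ,
    (∀ i, (φ i * h i).totalDegree ≤ 2 * k) ∧ p = ∑ i, φ i * h i}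

/-- The `k`-th truncated quadratic module generated by the tuple `g` (with `g₀ = 1`). -/
def truncQM {n m : ℕ} (g : Fin m → MvPolynomial (Fin n) ℝ) (k : ℕ) :
    Set (MvPolynomial (Fin n) ℝ) :=
  {p | ∃ σ : Fin (m + 1) → MvPolynomial (Fin n) ℝ,
    (∀ j, IsSOS (σ j) ∧
      (σ j * (Fin.cons 1 g : Fin (m + 1) → MvPolynomial (Fin n) ℝ) j).totalDegree ≤ 2 * k) ∧
    p = ∑ j, σ j * (Fin.cons 1 g : Fin (m + 1) → MvPolynomial (Fin n) ℝ) j}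

/-- The feasible set `K` of the problem `h = 0, g ≥ 0`. -/
def feasSet {n m₁ m₂ : ℕ} (h : Fin m₁ → MvPolynomial (Fin n) ℝ)
    (g : Fin m₂ → MvPolynomial (Fin n) ℝ) : Set (Fin n → ℝ) :=
  {x | (∀ i, eval x (h i) = 0) ∧ ∀ j, 0 ≤ eval x (g j)}

/-- The real variety `V_ℝ(h)`. -/
def realVariety {n m : ℕ} (h : Fin m → MvPolynomial (Fin n) ℝ) : Set (Fin n → ℝ) :=
  {x | ∀ i, eval x (h i) = 0}

/-- The vanishing ideal `I(S)` of a set `S ⊆ ℝⁿ`. -/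
def vanishIdeal {n : ℕ} (S : Set (Fin n → ℝ)) : Set (MvPolynomial (Fin n) ℝ) :=
  {p | ∀ u ∈ S, eval u p = 0}

/-- The `k`-th Lasserre bound `f_k` (an extended real). -/
noncomputable def lasserreBound {n m₁ m₂ : ℕ} (f : MvPolynomial (Fin n) ℝ)
    (h : Fin m₁ → MvPolynomial (Fin n) ℝ) (g : Fin m₂ → MvPolynomial (Fin n) ℝ)
    (k : ℕ) : EReal :=
  sSup {γ : EReal | ∃ r : ℝ, γ = (r : EReal) ∧ f - C r ∈ truncIdeal h k + truncQM g k}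

/-- `f_min`, the infimum of `f` over `K`, as an extended real (`⊤` if `K = ∅`). -/
noncomputable def fMin {n : ℕ} (f : MvPolynomial (Fin n) ℝ) (K : Set (Fin n → ℝ)) : EReal :=
  ⨅ x ∈ K, (eval x f : EReal)

/-! The identity `s^{2ℓ} + 2ℓ s + 2ℓ - 1 = ℓ (s + 1)^2 + ∑_{j<ℓ} ∑_{i<j} (s^i (s^2 - 1))^2`
shows that `ε + t + c₀ ε^{1-2ℓ} t^{2ℓ}`, with `c₀ = (1/(2ℓ)) (1 - 1/(2ℓ))^{2ℓ-1}`, is a sum of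
squares in `t` (substitute `s = (1 - 1/(2ℓ)) t / ε`); raising `c₀` to `c` adds a multiple of
`(t^ℓ)^2`. Hence `θ_ε` is this sum of squares evaluated at `p` plus the nonnegative multiple
`c ε^{1-2ℓ} q` of an element of `Q(g)`, and `φ_ε` is a scalar multiple of `p^{2ℓ} + q ∈ ⟨h⟩`.
Every degree involved is bounded independently of `ε`. -/

namespace IsSOS

variable {n : ℕ}

theorem zero : IsSOS (0 : MvPolynomial (Fin n) ℝ) := ⟨0, fun _ => 0, by simp⟩

theorem sq (q : MvPolynomial (Fin n) ℝ) : IsSOS (q ^ 2) := ⟨1, fun _ => q, by simp⟩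

theorem add {p q : MvPolynomial (Fin n) ℝ} (hp : IsSOS p) (hq : IsSOS q) : IsSOS (p + q) := by
  obtain ⟨m, u, rfl⟩ := hp
  obtain ⟨m', v, rfl⟩ := hq
  exact ⟨m + m', Fin.append u v, by simp [Fin.sum_univ_add]⟩

theorem C_mul {p : MvPolynomial (Fin n) ℝ} {r : ℝ} (hr : 0 ≤ r) (hp : IsSOS p) :
    IsSOS (C r * p) := by
  obtain ⟨m, u, rfl⟩ := hp
  refine ⟨m, fun i => C √r * u i, ?_⟩
  simp only [Finset.mul_sum, mul_pow, ← map_pow, Real.sq_sqrt hr]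

theorem sum {ι : Type*} (s : Finset ι) {f : ι → MvPolynomial (Fin n) ℝ}
    (hf : ∀ i ∈ s, IsSOS (f i)) : IsSOS (∑ i ∈ s, f i) :=
  Finset.sum_induction f IsSOS (fun _ _ => add) zero hf

end IsSOS

theorem pow_two_mul_add_eq_sum_sq {R : Type*} [CommRing R] (s : R) (ℓ : ℕ) :
    s ^ (2 * ℓ) + 2 * ℓ * s + (2 * ℓ - 1) =
      ℓ * (s + 1) ^ 2 + ∑ j ∈ Finset.range ℓ, ∑ i ∈ Finset.range j, (s ^ i * (s ^ 2 - 1)) ^ 2 := by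
  induction ℓ with
  | zero => simp
  | succ ℓ ih =>
    have hgeom : ∑ i ∈ Finset.range ℓ, (s ^ i * (s ^ 2 - 1)) ^ 2 =
        (s ^ 2 - 1) * (s ^ (2 * ℓ) - 1) := by
      calc ∑ i ∈ Finset.range ℓ, (s ^ i * (s ^ 2 - 1)) ^ 2
          = (∑ i ∈ Finset.range ℓ, (s ^ 2) ^ i) * (s ^ 2 - 1) * (s ^ 2 - 1) := by
            simp only [Finset.sum_mul]
            exact Finset.sum_congr rfl fun i _ => by ring
        _ = (s ^ 2 - 1) * (s ^ (2 * ℓ) - 1) := by rw [geom_sum_mul, pow_mul]; ring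
    rw [Finset.sum_range_succ, hgeom]
    push_cast
    linear_combination ih

theorem isSOS_pow_two_mul_add {n : ℕ} (s : MvPolynomial (Fin n) ℝ) (ℓ : ℕ) :
    IsSOS (s ^ (2 * ℓ) + 2 * ℓ * s + (2 * ℓ - 1) : MvPolynomial (Fin n) ℝ) := by
  rw [pow_two_mul_add_eq_sum_sq, ← map_natCast C]
  exact ((IsSOS.sq _).C_mul ℓ.cast_nonneg).add
    (IsSOS.sum _ fun _ _ => IsSOS.sum _ fun _ _ => IsSOS.sq _)

theorem isSOS_C_add_add_C_mul_pow {n ℓ : ℕ} (hℓ : 1 ≤ ℓ) {ε c : ℝ} (hε : 0 < ε)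
    (hc : 1 / (2 * (ℓ : ℝ)) * (1 - 1 / (2 * (ℓ : ℝ))) ^ (2 * ℓ - 1) ≤ c)
    (p : MvPolynomial (Fin n) ℝ) :
    IsSOS (C ε + p + C (c * ε ^ (1 - 2 * (ℓ : ℤ))) * p ^ (2 * ℓ)) := by
  set a : ℝ := 1 - 1 / (2 * ℓ) with ha
  set c₀ : ℝ := 1 / (2 * ℓ) * a ^ (2 * ℓ - 1) with hc₀
  have hℓ₀ : (0 : ℝ) < ℓ := by exact_mod_cast hℓ
  have h2ℓa : 2 * ℓ * a = 2 * ℓ - 1 := by rw [ha]; field_simp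
  have ha₀ : 0 < a := by
    have : (1 : ℝ) ≤ ℓ := by exact_mod_cast hℓ
    nlinarith
  have hscale : ε / (2 * ℓ * a) * (a / ε) ^ (2 * ℓ) = c₀ * ε ^ (1 - 2 * (ℓ : ℤ)) := by
    have hpow : a ^ (2 * ℓ) = a ^ (2 * ℓ - 1) * a := by rw [← pow_succ]; congr 1; omega
    rw [zpow_sub₀ hε.ne', zpow_one, div_pow, hpow, hc₀, zpow_mul, zpow_ofNat, zpow_natCast,
      ← pow_mul]
    field_simp
  clear_value a c₀
  set s : MvPolynomial (Fin n) ℝ := C (a / ε) * p with hs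
  have key : C ε + p + C (c * ε ^ (1 - 2 * (ℓ : ℤ))) * p ^ (2 * ℓ) =
      C (ε / (2 * ℓ * a)) *
          (s ^ (2 * ℓ) + 2 * ℓ * s + (2 * ℓ - 1) : MvPolynomial (Fin n) ℝ) +
        C ((c - c₀) * ε ^ (1 - 2 * (ℓ : ℤ))) * (p ^ ℓ) ^ 2 := by
    refine MvPolynomial.funext fun x => ?_
    simp only [hs, map_add, map_mul, map_pow, map_sub, eval_C, map_natCast, map_ofNat, map_one,
      mul_pow, ← pow_mul]
    generalize eval x p = t
    have hlin : ε / (2 * ℓ * a) * (2 * ℓ * (a / ε)) = 1 := by field_simp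
    have hconst : ε / (2 * ℓ * a) * (2 * ℓ - 1) = ε := by rw [← h2ℓa]; field_simp
    linear_combination -t ^ (2 * ℓ) * hscale - t * hlin - hconst
  rw [key]
  exact ((isSOS_pow_two_mul_add _ ℓ).C_mul (by positivity)).add
    ((IsSOS.sq _).C_mul (mul_nonneg (sub_nonneg.2 hc) (by positivity)))

theorem totalDegree_C_add_add_C_mul_pow_le {n : ℕ} (ε τ : ℝ) (p : MvPolynomial (Fin n) ℝ)
    {ℓ : ℕ} (hℓ : 1 ≤ ℓ) :
    (C ε + p + C τ * p ^ (2 * ℓ)).totalDegree ≤ 2 * (ℓ * p.totalDegree) := by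
  have hC : (C ε : MvPolynomial (Fin n) ℝ).totalDegree ≤ 2 * (ℓ * p.totalDegree) := by simp
  have hp : p.totalDegree ≤ 2 * (ℓ * p.totalDegree) := by nlinarith
  have hpow : (C τ * p ^ (2 * ℓ)).totalDegree ≤ 2 * (ℓ * p.totalDegree) := by
    calc (C τ * p ^ (2 * ℓ)).totalDegree ≤ (p ^ (2 * ℓ)).totalDegree :=
          (totalDegree_mul _ _).trans (by rw [totalDegree_C, zero_add])
      _ ≤ 2 * ℓ * p.totalDegree := totalDegree_pow _ _
      _ = 2 * (ℓ * p.totalDegree) := mul_assoc _ _ _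
  exact (totalDegree_add _ _).trans <|
    max_le ((totalDegree_add _ _).trans (max_le hC hp)) hpow

section Truncated

variable {n m : ℕ}

theorem exists_mem_truncIdeal {h : Fin m → MvPolynomial (Fin n) ℝ} {p : MvPolynomial (Fin n) ℝ}
    (hp : p ∈ Ideal.span (Set.range h)) : ∃ k, p ∈ truncIdeal h k := by
  obtain ⟨φ, rfl⟩ := Ideal.mem_span_range_iff_exists_fun.mp hp
  refine ⟨Finset.univ.sup fun i => (φ i * h i).totalDegree, φ, fun i => ?_, rfl⟩
  have := Finset.le_sup (f := fun i => (φ i * h i).totalDegree) (Finset.mem_univ i)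
  omega

theorem truncIdeal_mono (h : Fin m → MvPolynomial (Fin n) ℝ) {k k' : ℕ} (hk : k ≤ k') :
    truncIdeal h k ⊆ truncIdeal h k' := by
  rintro p ⟨φ, hdeg, rfl⟩
  exact ⟨φ, fun i => (hdeg i).trans (by omega), rfl⟩

theorem C_mul_mem_truncIdeal {h : Fin m → MvPolynomial (Fin n) ℝ} {k : ℕ}
    {p : MvPolynomial (Fin n) ℝ} (r : ℝ) (hp : p ∈ truncIdeal h k) :
    C r * p ∈ truncIdeal h k := by
  obtain ⟨φ, hdeg, rfl⟩ := hp
  refine ⟨fun i => C r * φ i, fun i => ?_, by simp only [Finset.mul_sum, mul_assoc]⟩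
  rw [mul_assoc]
  exact (totalDegree_mul _ _).trans (by rw [totalDegree_C, zero_add]; exact hdeg i)

theorem truncQM_mono (g : Fin m → MvPolynomial (Fin n) ℝ) {k k' : ℕ} (hk : k ≤ k') :
    truncQM g k ⊆ truncQM g k' := by
  rintro p ⟨σ, hσ, rfl⟩
  exact ⟨σ, fun j => ⟨(hσ j).1, (hσ j).2.trans (by omega)⟩, rfl⟩

theorem add_mem_truncQM {g : Fin m → MvPolynomial (Fin n) ℝ} {k : ℕ}
    {p q : MvPolynomial (Fin n) ℝ} (hp : p ∈ truncQM g k) (hq : q ∈ truncQM g k) :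
    p + q ∈ truncQM g k := by
  obtain ⟨σ, hσ, rfl⟩ := hp
  obtain ⟨τ, hτ, rfl⟩ := hq
  refine ⟨σ + τ, fun j => ⟨(hσ j).1.add (hτ j).1, ?_⟩, by
    simp only [Pi.add_apply, add_mul, Finset.sum_add_distrib]⟩
  rw [Pi.add_apply, add_mul]
  exact (totalDegree_add _ _).trans (max_le (hσ j).2 (hτ j).2)

theorem C_mul_mem_truncQM {g : Fin m → MvPolynomial (Fin n) ℝ} {k : ℕ}
    {p : MvPolynomial (Fin n) ℝ} {r : ℝ} (hr : 0 ≤ r) (hp : p ∈ truncQM g k) :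
    C r * p ∈ truncQM g k := by
  obtain ⟨σ, hσ, rfl⟩ := hp
  refine ⟨fun j => C r * σ j, fun j => ⟨(hσ j).1.C_mul hr, ?_⟩,
    by simp only [Finset.mul_sum, mul_assoc]⟩
  rw [mul_assoc]
  exact (totalDegree_mul _ _).trans (by rw [totalDegree_C, zero_add]; exact (hσ j).2)

theorem mem_truncQM_of_isSOS (g : Fin m → MvPolynomial (Fin n) ℝ) {k : ℕ}
    {σ : MvPolynomial (Fin n) ℝ} (hσ : IsSOS σ) (hdeg : σ.totalDegree ≤ 2 * k) :
    σ ∈ truncQM g k := by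
  refine ⟨Pi.single 0 σ, fun j => ?_, by simp [Fin.sum_univ_succ]⟩
  rcases eq_or_ne j 0 with rfl | hj
  · simpa using And.intro hσ hdeg
  · simpa [hj] using IsSOS.zero

end Truncated

/-- Lemma 2.1 (ii)-(iii): if `p^{2ℓ} + q ∈ ⟨h⟩` and `q ∈ Q(g)`, then there is `N > 0`
such that for all `ε > 0`, `p + ε = φ_ε + θ_ε` with `φ_ε ∈ ⟨h⟩_{2N}` and `θ_ε ∈ Q_N(g)`,
where `φ_ε = −c·ε^{1−2ℓ}·(p^{2ℓ} + q)` and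
`θ_ε = ε + p + c·ε^{1−2ℓ}·p^{2ℓ} + c·ε^{1−2ℓ}·q`. -/
theorem eps_perturbation_representation
    {n m₁ m₂ : ℕ} (h : Fin m₁ → MvPolynomial (Fin n) ℝ)
    (g : Fin m₂ → MvPolynomial (Fin n) ℝ)
    (p q : MvPolynomial (Fin n) ℝ) (ℓ : ℕ) (hℓ : 1 ≤ ℓ) (c : ℝ)
    (hc : (1 / (2 * (ℓ : ℝ))) * (1 - 1 / (2 * (ℓ : ℝ))) ^ (2 * ℓ - 1) ≤ c)
    (hpq : p ^ (2 * ℓ) + q ∈ Ideal.span (Set.range h))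
    (hq : q ∈ ⋃ k : ℕ, truncQM g k) :
    ∃ N : ℕ, 0 < N ∧ ∀ ε : ℝ, 0 < ε →
      p + C ε =
        (-C (c * ε ^ (1 - 2 * (ℓ : ℤ))) * (p ^ (2 * ℓ) + q)) +
          (C ε + p + C (c * ε ^ (1 - 2 * (ℓ : ℤ))) * p ^ (2 * ℓ) +
            C (c * ε ^ (1 - 2 * (ℓ : ℤ))) * q) ∧
      (-C (c * ε ^ (1 - 2 * (ℓ : ℤ))) * (p ^ (2 * ℓ) + q)) ∈ truncIdeal h N ∧
      (C ε + p + C (c * ε ^ (1 - 2 * (ℓ : ℤ))) * p ^ (2 * ℓ) +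
        C (c * ε ^ (1 - 2 * (ℓ : ℤ))) * q) ∈ truncQM g N := by
  obtain ⟨k₁, hk₁⟩ := exists_mem_truncIdeal hpq
  obtain ⟨k₂, hk₂⟩ := Set.mem_iUnion.mp hq
  refine ⟨k₁ + k₂ + ℓ * p.totalDegree + 1, by omega, fun ε hε => ⟨by ring, ?_, ?_⟩⟩
  · rw [← map_neg]
    exact truncIdeal_mono h (by omega) (C_mul_mem_truncIdeal _ hk₁)
  · have hℓ' : (1 : ℝ) ≤ 2 * ℓ := by norm_cast; omega
    have hc_nonneg : 0 ≤ c := le_trans (mul_nonneg (by positivity)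
      (pow_nonneg (sub_nonneg.2 (div_le_one_of_le₀ hℓ' (by positivity))) _)) hc
    refine add_mem_truncQM (mem_truncQM_of_isSOS g (isSOS_C_add_add_C_mul_pow hℓ hε hc p) ?_)
      (truncQM_mono g (by omega) (C_mul_mem_truncQM (by positivity) hk₂))
    exact (totalDegree_C_add_add_C_mul_pow_le _ _ p hℓ).trans (by omega)
end

section
/- Let f ∈ ℝ[x₁,…,xₙ] and let h, g be tuples of polynomials with feasible set K nonempty. Suppose the real variety V_ℝ(h) is finite and the ideal ⟨h⟩ is real, i.e., ⟨h⟩ = I(V_ℝ(h)). Then the SOS relaxation achieves its optimum for all sufficiently large orders: there exists N such that for all k ≥ N, f − f_min ∈ ⟨h⟩_{2k} + Q_k(g), where f_min is the minimum of f over K. -/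
open MvPolynomial Pointwise

lemma isSOS_finsetSum {n : ℕ} (s : Finset (Fin n → ℝ))
    (r : (Fin n → ℝ) → MvPolynomial (Fin n) ℝ) :
    IsSOS (∑ v ∈ s, (r v) ^ 2) := by
  classical
  refine ⟨Fintype.card s, fun i => r ((Fintype.equivFin s).symm i), ?_⟩
  rw [← Finset.sum_coe_sort s (fun v => r v ^ 2)]
  exact Fintype.sum_equiv (Fintype.equivFin s) _ _ (fun v => by simp)

lemma interp {n : ℕ} (V : Finset (Fin n → ℝ)) (u : Fin n → ℝ) :
    ∃ p : MvPolynomial (Fin n) ℝ,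
      eval u p = 1 ∧ ∀ v ∈ V, v ≠ u → eval v p = 0 := by
  classical
  have key : ∀ v ∈ V.erase u, ∃ q : MvPolynomial (Fin n) ℝ,
      eval u q = 1 ∧ eval v q = 0 := by
    intro v hv
    obtain ⟨i, hi⟩ := Function.ne_iff.mp (Finset.ne_of_mem_erase hv)
    have hne : u i - v i ≠ 0 := sub_ne_zero.mpr (Ne.symm hi)
    refine ⟨C (u i - v i)⁻¹ * (X i - C (v i)), ?_, ?_⟩
    · simp [inv_mul_cancel₀ hne]
    · simp
  choose! q hq1 hq0 using key
  refine ⟨∏ v ∈ V.erase u, q v, ?_, ?_⟩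
  · rw [map_prod]
    exact Finset.prod_eq_one (fun v hv => hq1 v hv)
  · intro v hv hvu
    have hv' : v ∈ V.erase u := Finset.mem_erase.mpr ⟨hvu, hv⟩
    rw [map_prod]
    exact Finset.prod_eq_zero hv' (hq0 v hv')


/-- If `K ≠ ∅`, `V_ℝ(h)` is finite and the ideal `⟨h⟩` is real
(`⟨h⟩ = I(V_ℝ(h))`), then the SOS relaxation achieves its optimum `f_min`
for all big enough relaxation orders. -/
theorem sos_relaxation_achieves_optimum_of_real_ideal
    {n m₁ m₂ : ℕ} (f : MvPolynomial (Fin n) ℝ)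
    (h : Fin m₁ → MvPolynomial (Fin n) ℝ) (g : Fin m₂ → MvPolynomial (Fin n) ℝ)
    (hKne : (feasSet h g).Nonempty) (hfin : (realVariety h).Finite)
    (hreal : (Ideal.span (Set.range h) : Set (MvPolynomial (Fin n) ℝ)) =
      vanishIdeal (realVariety h)) :
    ∀ fm : ℝ, IsLeast ((fun x => eval x f) '' feasSet h g) fm →
      ∃ N : ℕ, ∀ k ≥ N, f - C fm ∈ truncIdeal h k + truncQM g k := by
  intro fm hfm
  classical
  set V : Finset (Fin n → ℝ) := hfin.toFinset with hVdef
  have hmemV : ∀ u, u ∈ V ↔ u ∈ realVariety h := fun u => hfin.mem_toFinset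
  choose L hL1 hL0 using fun u => interp V u
  set G : Fin (m₂ + 1) → MvPolynomial (Fin n) ℝ := Fin.cons 1 g with hGdef
  have hexist : ∀ u ∈ V, ∃ (j : Fin (m₂ + 1)) (cu : ℝ),
      0 ≤ cu ∧ cu * eval u (G j) = eval u f - fm := by
    intro u hu
    by_cases hge : 0 ≤ eval u f - fm
    · exact ⟨0, eval u f - fm, hge, by simp [hGdef]⟩
    · push_neg at hge
      have hnotK : ∃ j, eval u (g j) < 0 := by
        by_contra hc
        push_neg at hc
        have huK : u ∈ feasSet h g := ⟨(hmemV u).mp hu, hc⟩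
        have := hfm.2 ⟨u, huK, rfl⟩
        linarith
      obtain ⟨j, hj⟩ := hnotK
      refine ⟨j.succ, (eval u f - fm) / eval u (g j),
        le_of_lt (div_pos_of_neg_of_neg hge hj), ?_⟩
      simp only [hGdef, Fin.cons_succ]
      exact div_mul_cancel₀ _ (ne_of_lt hj)
  choose! idx c hc0 hcmul using hexist
  set σ : Fin (m₂ + 1) → MvPolynomial (Fin n) ℝ :=
    fun j => ∑ u ∈ V.filter (fun u => idx u = j), (C (Real.sqrt (c u)) * L u) ^ 2
    with hσdef
  have hσeval : ∀ v ∈ V, ∀ j, eval v (σ j) = if idx v = j then c v else 0 := by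
    intro v hv j
    rw [hσdef]
    simp only [map_sum, map_pow, map_mul, eval_C]
    by_cases hj : idx v = j
    · rw [if_pos hj, Finset.sum_eq_single_of_mem v (Finset.mem_filter.mpr ⟨hv, hj⟩)]
      · rw [hL1 v, mul_one, sq, Real.mul_self_sqrt (hc0 v hv)]
      · intro u hu hne
        rw [hL0 u v hv hne.symm]
        ring
    · rw [if_neg hj]
      apply Finset.sum_eq_zero
      intro u hu
      obtain ⟨huV, hju⟩ := Finset.mem_filter.mp hu
      have hne : v ≠ u := by
        rintro rfl; exact hj hju
      rw [hL0 u v hv hne]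
      ring
  have hseval : ∀ v ∈ realVariety h,
      eval v (∑ j, σ j * G j) = eval v f - fm := by
    intro v hv
    have hvV : v ∈ V := (hmemV v).mpr hv
    rw [map_sum]
    simp only [map_mul, hσeval v hvV, ite_mul, zero_mul]
    rw [Finset.sum_ite_eq]
    simpa using hcmul v hvV
  set p : MvPolynomial (Fin n) ℝ := f - C fm - ∑ j, σ j * G j with hpdef
  have hpvan : ∀ v ∈ realVariety h, eval v p = 0 := by
    intro v hv
    simp only [hpdef, map_sub, eval_C, hseval v hv]
    ring
  have hpmem : p ∈ Ideal.span (Set.range h) := by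
    have : p ∈ vanishIdeal (realVariety h) := fun v hv => hpvan v hv
    rw [← hreal] at this
    exact this
  obtain ⟨φ, hφ⟩ := Ideal.mem_span_range_iff_exists_fun.mp hpmem
  set N : ℕ := (Finset.univ.sup fun i => (φ i * h i).totalDegree) ⊔
    (Finset.univ.sup fun j => (σ j * G j).totalDegree) with hNdef
  refine ⟨N, fun k hk => ?_⟩
  rw [Set.mem_add]
  refine ⟨p, ⟨φ, fun i => ?_, hφ.symm⟩, ∑ j, σ j * G j,
    ⟨σ, fun j => ⟨?_, ?_⟩, rfl⟩, by rw [hpdef]; ring⟩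
  · calc (φ i * h i).totalDegree
        ≤ Finset.univ.sup fun i => (φ i * h i).totalDegree :=
          Finset.le_sup (f := fun i => (φ i * h i).totalDegree) (Finset.mem_univ i)
      _ ≤ N := le_sup_left
      _ ≤ 2 * k := by omega
  · exact isSOS_finsetSum _ _
  · calc (σ j * G j).totalDegree
        ≤ Finset.univ.sup fun j => (σ j * G j).totalDegree :=
          Finset.le_sup (f := fun j => (σ j * G j).totalDegree) (Finset.mem_univ j)
      _ ≤ N := le_sup_right
      _ ≤ 2 * k := by omega
end

section
/- Let f ∈ ℝ[x₁,…,xₙ] and let h, g be tuples of polynomials with feasible set K. Suppose f_min = inf_{x∈K} f(x) is finite, Lasserre's hierarchy has finite convergence (f_k = f_min for all sufficiently large k), and ⟨h⟩ = I(K). Then the SOS relaxation achieves its optimum for all sufficiently large orders: there exists N such that for all k ≥ N, f − f_min ∈ ⟨h⟩_{2k} + Q_k(g). -/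
open MvPolynomial Pointwise

/-!
At an order `N₀` where the hierarchy has converged there are certificates
`f - rⱼ = aⱼ + ∑ᵢ σⱼᵢ gᵢ` with `aⱼ ∈ ⟨h⟩_{2N₀}` and `rⱼ → f_min`. Since the leading forms of a sum
of squares cannot cancel, each `σⱼᵢ` is a sum of squares of polynomials of degree at most `2N₀`, and
after factoring its Gram matrix it reads `x ↦ ∑ₛ ⟪cₛ, [x]⟫²` for a fixed number of coefficient
vectors `cₛ`, where `[x]` is the vector of monomials. On `K` only the projection of `cₛ` onto the
span of the `[x]` with `x ∈ K`, `gᵢ x ≠ 0` matters, and it is bounded because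
`σⱼᵢ(x) gᵢ(x) ≤ f(x) - rⱼ` there. A convergent subsequence gives sums of squares `τᵢ` with
`f - f_min - ∑ᵢ τᵢ gᵢ` vanishing on `K`, i.e. lying in `I(K) = ⟨h⟩`; this exact certificate belongs
to `⟨h⟩_{2k} + Q_k(g)` as soon as `2k` exceeds its degrees.
-/

open scoped Matrix RealInnerProductSpace
open Filter Topology

theorem Matrix.sum_mulVec_sq {τ ι : Type*} [Fintype τ] [Fintype ι] (A : Matrix τ ι ℝ)
    (y : ι → ℝ) : ∑ t, (A *ᵥ y) t ^ 2 = y ⬝ᵥ (Aᵀ * A) *ᵥ y := by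
  rw [← Matrix.mulVec_mulVec, Matrix.dotProduct_mulVec, Matrix.vecMul_transpose]
  simp only [dotProduct, sq]

theorem EuclideanSpace.exists_sum_inner_sq_eq {κ ι : Type*} [Fintype κ] [Fintype ι]
    (c : κ → EuclideanSpace ℝ ι) :
    ∃ c' : ι → EuclideanSpace ℝ ι, ∀ y, ∑ t, ⟪c t, y⟫ ^ 2 = ∑ s, ⟪c' s, y⟫ ^ 2 := by
  classical
  have inner_eq : ∀ (x y : EuclideanSpace ℝ ι), ⟪x, y⟫ = x.ofLp ⬝ᵥ y.ofLp := fun x y => by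
    rw [EuclideanSpace.inner_eq_star_dotProduct, star_trivial, dotProduct_comm]
  set A : Matrix κ ι ℝ := Matrix.of fun t => (c t).ofLp
  -- a square root `B` of the Gram matrix `AᵀA` has one row per coordinate, whatever `κ` is
  obtain ⟨B, hB⟩ : ∃ B : Matrix ι ι ℝ, Aᵀ * A = Bᵀ * B := by
    open scoped MatrixOrder Matrix.Norms.L2Operator in
    simpa [Matrix.star_eq_conjTranspose] using CStarAlgebra.nonneg_iff_eq_star_mul_self.mp
      (Matrix.posSemidef_conjTranspose_mul_self A).nonneg
  refine ⟨fun s => WithLp.toLp 2 (B s), fun y => ?_⟩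
  simp only [inner_eq]
  change ∑ t, (A *ᵥ y.ofLp) t ^ 2 = ∑ s, (B *ᵥ y.ofLp) s ^ 2
  rw [Matrix.sum_mulVec_sq, Matrix.sum_mulVec_sq, hB]

theorem isBounded_range_of_forall_abs_inner_le {E α : Type*} [NormedAddCommGroup E]
    [InnerProductSpace ℝ E] [FiniteDimensional ℝ E] {S : Set E} {c : α → E}
    (hc : ∀ a, c a ∈ Submodule.span ℝ S) (hS : ∀ y ∈ S, ∃ B, ∀ a, |⟪c a, y⟫| ≤ B) :
    Bornology.IsBounded (Set.range c) := by
  obtain ⟨b, hbS, hspan, hli⟩ := exists_linearIndependent ℝ S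
  have : Fintype b := hli.setFinite.fintype
  choose B hB using fun y : b => hS y (hbS y.2)
  let T : Submodule.span ℝ S →ₗ[ℝ] (b → ℝ) :=
    LinearMap.pi fun y => (innerₛₗ ℝ (y : E)).comp (Submodule.span ℝ S).subtype
  have hT : LinearMap.ker T = ⊥ := by
    refine LinearMap.ker_eq_bot'.mpr fun u hu => ?_
    have hu' : (u : E) ∈ (ℝ ∙ (u : E))ᗮ := by
      refine Submodule.span_le.mpr (fun y hy => ?_) (by rw [hspan]; exact u.2)
      exact Submodule.mem_orthogonal_singleton_iff_inner_left.mpr (congrFun hu ⟨y, hy⟩)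
    exact Subtype.ext <| inner_self_eq_zero.mp <|
      Submodule.mem_orthogonal_singleton_iff_inner_right.mp hu'
  obtain ⟨K, -, hK⟩ := T.exists_antilipschitzWith hT
  have hM : 0 ≤ ∑ y, |B y| := Finset.sum_nonneg fun y _ => abs_nonneg _
  refine isBounded_iff_forall_norm_le.mpr ⟨K * ∑ y, |B y|, ?_⟩
  rintro _ ⟨a, rfl⟩
  calc ‖c a‖ = ‖(⟨c a, hc a⟩ : Submodule.span ℝ S)‖ := rfl
    _ ≤ K * ‖T ⟨c a, hc a⟩‖ := hK.le_mul_norm (map_zero T) _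
    _ ≤ K * ∑ y, |B y| := by
      gcongr
      refine (pi_norm_le_iff_of_nonneg hM).mpr fun y => ?_
      calc ‖T ⟨c a, hc a⟩ y‖ = |⟪c a, y⟫| := by simp [T, real_inner_comm]
        _ ≤ |B y| := (hB y a).trans (le_abs_self _)
        _ ≤ ∑ y, |B y| := Finset.single_le_sum (f := fun y => |B y|)
            (fun y _ => abs_nonneg _) (Finset.mem_univ y)

section WeightedSumSq

variable {X E ι κ : Type*} [NormedAddCommGroup E] [InnerProductSpace ℝ E] [Fintype ι] [Fintype κ]

def weightedSumSq (v : X → E) (w : ι → X → ℝ) (c : ι → κ → E) (x : X) : ℝ :=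
  ∑ i, (∑ s, ⟪c i s, v x⟫ ^ 2) * w i x

theorem inner_sq_mul_le_weightedSumSq {v : X → E} {w : ι → X → ℝ} (c : ι → κ → E) {x : X}
    (hw : ∀ i, 0 ≤ w i x) (i : ι) (s : κ) : ⟪c i s, v x⟫ ^ 2 * w i x ≤ weightedSumSq v w c x :=
  calc ⟪c i s, v x⟫ ^ 2 * w i x ≤ (∑ s, ⟪c i s, v x⟫ ^ 2) * w i x :=
        mul_le_mul_of_nonneg_right (Finset.single_le_sum (f := fun s => ⟪c i s, v x⟫ ^ 2)
          (fun _ _ => sq_nonneg _) (Finset.mem_univ s)) (hw i)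
    _ ≤ weightedSumSq v w c x :=
        Finset.single_le_sum (f := fun i => (∑ s, ⟪c i s, v x⟫ ^ 2) * w i x)
          (fun i _ => mul_nonneg (Finset.sum_nonneg fun _ _ => sq_nonneg _) (hw i))
          (Finset.mem_univ i)

theorem weightedSumSq_starProjection [FiniteDimensional ℝ E] (v : X → E) (w : ι → X → ℝ)
    (c : ι → κ → E) :
    weightedSumSq v w
        (fun i s => (Submodule.span ℝ (v '' {x | w i x ≠ 0})).starProjection (c i s)) =
      weightedSumSq v w c := by
  ext x
  refine Finset.sum_congr rfl fun i _ => ?_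
  by_cases hx : w i x = 0
  · simp [hx]
  · simp_rw [Submodule.inner_starProjection_left_eq_right,
      Submodule.starProjection_eq_self_iff.mpr
        (Submodule.subset_span (Set.mem_image_of_mem v (show x ∈ {x | w i x ≠ 0} from hx)))]

theorem continuous_weightedSumSq (v : X → E) (w : ι → X → ℝ) (x : X) :
    Continuous fun c : ι → κ → E => weightedSumSq v w c x := by
  unfold weightedSumSq
  fun_prop

theorem exists_weightedSumSq_eq_of_tendsto [FiniteDimensional ℝ E] {v : X → E}
    {w : ι → X → ℝ} (hw : ∀ i x, 0 ≤ w i x) {c : ℕ → ι → κ → E} {F : X → ℝ}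
    (hF : ∀ x, Tendsto (fun j => weightedSumSq v w (c j) x) atTop (𝓝 (F x))) :
    ∃ c' : ι → κ → E, ∀ x, weightedSumSq v w c' x = F x := by
  set W : ι → Submodule ℝ E := fun i => Submodule.span ℝ (v '' {x | w i x ≠ 0})
  set p : ℕ → ι → κ → E := fun j i s => (W i).starProjection (c j i s)
  have hp : ∀ j, weightedSumSq v w (p j) = weightedSumSq v w (c j) := fun j =>
    weightedSumSq_starProjection v w (c j)
  have hbdd : Bornology.IsBounded (Set.range p) := by
    refine Bornology.forall_isBounded_image_eval_iff.mp fun i =>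
      Bornology.forall_isBounded_image_eval_iff.mp fun s => ?_
    rw [← Set.range_comp, ← Set.range_comp]
    refine isBounded_range_of_forall_abs_inner_le (fun j => (W i).starProjection_apply_mem _) ?_
    rintro _ ⟨x, hx, rfl⟩
    obtain ⟨M, hM⟩ := (hF x).bddAbove_range
    refine ⟨√(M / w i x), fun j => Real.abs_le_sqrt ?_⟩
    rw [le_div_iff₀ ((hw i x).lt_of_ne' hx)]
    calc ⟪p j i s, v x⟫ ^ 2 * w i x ≤ weightedSumSq v w (p j) x :=
          inner_sq_mul_le_weightedSumSq (p j) (fun i => hw i x) i s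
      _ ≤ M := hp j ▸ hM ⟨j, rfl⟩
  obtain ⟨c', -, φ, hφ, hlim⟩ := tendsto_subseq_of_bounded hbdd (fun j => Set.mem_range_self j)
  refine ⟨c', fun x => tendsto_nhds_unique ?_ ((hF x).comp hφ.tendsto_atTop)⟩
  simpa only [Function.comp_def, hp] using ((continuous_weightedSumSq v w x).tendsto c').comp hlim

end WeightedSumSq

namespace MvPolynomial

section Homogeneous

variable {σ R : Type*} [CommSemiring R]

theorem homogeneousComponent_add_mul {p q : MvPolynomial σ R} {a b : ℕ}
    (hp : p.totalDegree ≤ a) (hq : q.totalDegree ≤ b) :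
    homogeneousComponent (a + b) (p * q) = homogeneousComponent a p * homogeneousComponent b q := by
  classical
  ext d
  rw [coeff_homogeneousComponent, coeff_mul, coeff_mul]
  have hp' : ∀ u : σ →₀ ℕ, a < u.degree → coeff u p = 0 := fun u hu =>
    coeff_eq_zero_of_totalDegree_lt (hp.trans_lt hu)
  have hq' : ∀ v : σ →₀ ℕ, b < v.degree → coeff v q = 0 := fun v hv =>
    coeff_eq_zero_of_totalDegree_lt (hq.trans_lt hv)
  split_ifs with hd
  · refine Finset.sum_congr rfl fun ⟨u, v⟩ huv => ?_
    have huv : u.degree + v.degree = a + b := by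
      rw [← hd, ← (Finset.HasAntidiagonal.mem_antidiagonal.mp huv), map_add]
    simp only [coeff_homogeneousComponent]
    by_cases hu : u.degree = a
    · rw [if_pos hu, if_pos (by omega)]
    rcases lt_or_gt_of_ne hu with hu | hu
    · rw [hq' v (by omega)]; simp
    · rw [hp' u hu]; simp
  · refine (Finset.sum_eq_zero fun ⟨u, v⟩ huv => ?_).symm
    have huv : u.degree + v.degree = d.degree := by
      rw [← (Finset.HasAntidiagonal.mem_antidiagonal.mp huv), map_add]
    simp only [coeff_homogeneousComponent]
    split_ifs <;> first | omega | simp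

theorem homogeneousComponent_totalDegree_ne_zero {p : MvPolynomial σ R} (hp : p ≠ 0) :
    homogeneousComponent p.totalDegree p ≠ 0 := by
  obtain ⟨d, hd, hdeg⟩ := Finset.exists_mem_eq_sup p.support (support_nonempty.mpr hp)
    Finsupp.degree
  have hd' : d.degree = p.totalDegree := hdeg.symm
  refine ne_of_apply_ne (coeff d) ?_
  rw [coeff_homogeneousComponent, if_pos hd', coeff_zero]
  exact mem_support_iff.mp hd

end Homogeneous

section SumSq

variable {σ ι : Type*} [Fintype ι]

theorem eq_zero_of_sum_sq_eq_zero {q : ι → MvPolynomial σ ℝ} (h : ∑ j, q j ^ 2 = 0) (i : ι) :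
    q i = 0 := by
  refine MvPolynomial.funext fun x => ?_
  have hx : ∑ j, eval x (q j) ^ 2 = 0 := by simpa using congrArg (eval x) h
  simpa using (Finset.sum_eq_zero_iff_of_nonneg fun j _ => sq_nonneg _).mp hx i (Finset.mem_univ i)

theorem two_mul_totalDegree_le_totalDegree_sum_sq (q : ι → MvPolynomial σ ℝ) (i : ι) :
    2 * (q i).totalDegree ≤ (∑ j, q j ^ 2).totalDegree := by
  obtain ⟨j₀, -, hj₀⟩ :=
    Finset.exists_max_image Finset.univ (fun j => (q j).totalDegree) ⟨i, Finset.mem_univ i⟩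
  have hle : ∀ j, (q j).totalDegree ≤ (q j₀).totalDegree := fun j => hj₀ j (Finset.mem_univ j)
  rcases eq_or_ne (q j₀) 0 with h0 | h0
  · have := hle i
    rw [h0, totalDegree_zero] at this
    omega
  set d := (q j₀).totalDegree
  have htop : homogeneousComponent (d + d) (∑ j, q j ^ 2) =
      ∑ j, homogeneousComponent d (q j) ^ 2 := by
    simp only [map_sum, sq]
    exact Finset.sum_congr rfl fun j _ => homogeneousComponent_add_mul (hle j) (hle j)
  have hne : homogeneousComponent (d + d) (∑ j, q j ^ 2) ≠ 0 := by
    rw [htop]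
    exact fun h => homogeneousComponent_totalDegree_ne_zero h0 (eq_zero_of_sum_sq_eq_zero h j₀)
  have := not_lt.mp (mt (homogeneousComponent_eq_zero _ _) hne)
  have := hle i
  omega

theorem two_mul_totalDegree_add_le_totalDegree_sum_sq_mul (q : ι → MvPolynomial σ ℝ)
    {g : MvPolynomial σ ℝ} (hg : g ≠ 0) {i : ι} (hi : q i ≠ 0) :
    2 * (q i).totalDegree + g.totalDegree ≤ ((∑ j, q j ^ 2) * g).totalDegree := by
  rw [totalDegree_mul_of_isDomain (fun h => hi (eq_zero_of_sum_sq_eq_zero h i)) hg]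
  have := two_mul_totalDegree_le_totalDegree_sum_sq q i
  omega

end SumSq

noncomputable section

variable {n : ℕ}

def exponentBox (n D : ℕ) : Finset (Fin n →₀ ℕ) :=
  Finset.Iic (Finsupp.equivFunOnFinite.symm fun _ => D)

theorem support_subset_exponentBox {p : MvPolynomial (Fin n) ℝ} {D : ℕ}
    (hp : p.totalDegree ≤ D) : p.support ⊆ exponentBox n D := fun d hd => by
  simp only [exponentBox, Finset.mem_Iic, Finsupp.le_def]
  exact fun i => (Finsupp.le_degree i d).trans ((le_totalDegree hd).trans hp)

def ofCoeffs {D : ℕ} (c : EuclideanSpace ℝ (exponentBox n D)) : MvPolynomial (Fin n) ℝ :=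
  ∑ s, monomial s.1 (c s)

def monomialVec (D : ℕ) (x : Fin n → ℝ) : EuclideanSpace ℝ (exponentBox n D) :=
  WithLp.toLp 2 fun s => eval x (monomial s.1 1)

theorem eval_ofCoeffs {D : ℕ} (c : EuclideanSpace ℝ (exponentBox n D)) (x : Fin n → ℝ) :
    eval x (ofCoeffs c) = ⟪c, monomialVec D x⟫ := by
  simp [ofCoeffs, monomialVec, PiLp.inner_apply, eval_monomial, mul_comm]

theorem ofCoeffs_coeff {p : MvPolynomial (Fin n) ℝ} {D : ℕ} (hp : p.totalDegree ≤ D) :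
    ofCoeffs (WithLp.toLp 2 fun s : exponentBox n D => coeff s.1 p) = p := by
  rw [ofCoeffs, Finset.sum_coe_sort (exponentBox n D) fun d => monomial d (coeff d p),
    ← Finset.sum_subset (support_subset_exponentBox hp) fun d _ hd => by
      rw [notMem_support_iff.mp hd, monomial_zero]]
  exact p.as_sum.symm

theorem _root_.IsSOS.exists_eval_eq_sum_inner_sq {p g : MvPolynomial (Fin n) ℝ} (hp : IsSOS p)
    (hg : g ≠ 0) {e : ℕ} (hdeg : (p * g).totalDegree ≤ e) :
    ∃ c : exponentBox n e → EuclideanSpace ℝ (exponentBox n e),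
      ∀ x, eval x p = ∑ s, ⟪c s, monomialVec e x⟫ ^ 2 := by
  obtain ⟨m, q, rfl⟩ := hp
  have hq : ∀ t, (q t).totalDegree ≤ e := fun t => by
    rcases eq_or_ne (q t) 0 with h0 | h0
    · simp [h0]
    · have := two_mul_totalDegree_add_le_totalDegree_sum_sq_mul q hg h0
      omega
  obtain ⟨c, hc⟩ := EuclideanSpace.exists_sum_inner_sq_eq
    fun t => WithLp.toLp 2 fun s : exponentBox n e => coeff s.1 (q t)
  refine ⟨c, fun x => ?_⟩
  rw [← hc]
  simp only [map_sum, map_pow, ← eval_ofCoeffs, ofCoeffs_coeff (hq _)]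

end

end MvPolynomial

theorem isSOS_sum_sq {n : ℕ} {ι : Type*} [Fintype ι] (p : ι → MvPolynomial (Fin n) ℝ) :
    IsSOS (∑ i, p i ^ 2) :=
  ⟨Fintype.card ι, fun t => p ((Fintype.equivFin ι).symm t),
    (Equiv.sum_comp (Fintype.equivFin ι).symm fun i => p i ^ 2).symm⟩

theorem exists_isSOS_eval_eq_of_tendsto {n : ℕ} {ι : Type*} [Fintype ι]
    {K : Set (Fin n → ℝ)} {g : ι → MvPolynomial (Fin n) ℝ} (hg : ∀ x ∈ K, ∀ i, 0 ≤ eval x (g i))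
    {e : ℕ} {σ : ℕ → ι → MvPolynomial (Fin n) ℝ}
    (hσ : ∀ j i, IsSOS (σ j i) ∧ (σ j i * g i).totalDegree ≤ e) {F : (Fin n → ℝ) → ℝ}
    (hF : ∀ x ∈ K, Tendsto (fun j => ∑ i, eval x (σ j i) * eval x (g i)) atTop (𝓝 (F x))) :
    ∃ τ : ι → MvPolynomial (Fin n) ℝ,
      (∀ i, IsSOS (τ i)) ∧ ∀ x ∈ K, ∑ i, eval x (τ i) * eval x (g i) = F x := by
  have hc : ∀ j i, ∃ c : exponentBox n e → EuclideanSpace ℝ (exponentBox n e), ∀ x,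
      eval x (σ j i) * eval x (g i) = (∑ s, ⟪c s, monomialVec e x⟫ ^ 2) * eval x (g i) := by
    intro j i
    rcases eq_or_ne (g i) 0 with h0 | h0
    · exact ⟨0, fun x => by simp [h0]⟩
    · obtain ⟨c, hc⟩ := (hσ j i).1.exists_eval_eq_sum_inner_sq h0 (hσ j i).2
      exact ⟨c, fun x => by rw [hc]⟩
  choose c hc using hc
  obtain ⟨c', hc'⟩ := exists_weightedSumSq_eq_of_tendsto (X := K)
    (v := fun x => monomialVec e x.1) (w := fun i x => eval x.1 (g i)) (fun i x => hg x x.2 i)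
    (c := c) (F := fun x => F x.1) fun x => by simpa [weightedSumSq, hc] using hF x x.2
  refine ⟨fun i => ∑ s, ofCoeffs (c' i s) ^ 2, fun i => isSOS_sum_sq _, fun x hx => ?_⟩
  simpa [weightedSumSq, eval_ofCoeffs] using hc' ⟨x, hx⟩

section Truncation

variable {n m₁ m₂ : ℕ} {h : Fin m₁ → MvPolynomial (Fin n) ℝ} {g : Fin m₂ → MvPolynomial (Fin n) ℝ}

theorem exists_seq_tendsto_of_lasserreBound_eq {f : MvPolynomial (Fin n) ℝ} {k : ℕ} {fm : ℝ}
    (hk : lasserreBound f h g k = fm) :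
    ∃ r : ℕ → ℝ, Tendsto r atTop (𝓝 fm) ∧ ∀ j, f - C (r j) ∈ truncIdeal h k + truncQM g k := by
  set S := {r : ℝ | f - C r ∈ truncIdeal h k + truncQM g k}
  have hS : {γ : EReal | ∃ r : ℝ, γ = r ∧ f - C r ∈ truncIdeal h k + truncQM g k} =
      ((↑) : ℝ → EReal) '' S := by
    ext γ
    simp [S, eq_comm, and_comm]
  rw [lasserreBound, hS] at hk
  have hne : S.Nonempty := by
    by_contra hS
    rw [Set.not_nonempty_iff_eq_empty.mp hS, Set.image_empty, sSup_empty] at hk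
    exact EReal.bot_ne_coe fm hk
  have hlub : IsLUB S fm := IsLUB.of_image EReal.coe_le_coe_iff (hk ▸ isLUB_sSup _)
  obtain ⟨r, -, -, hr, hrS⟩ := hlub.exists_seq_monotone_tendsto hne
  exact ⟨r, hr, hrS⟩

theorem eval_eq_zero_of_mem_truncIdeal {p : MvPolynomial (Fin n) ℝ} {k : ℕ}
    (hp : p ∈ truncIdeal h k) {x : Fin n → ℝ} (hx : x ∈ realVariety h) : eval x p = 0 := by
  obtain ⟨φ, -, rfl⟩ := hp
  simp [hx _]

theorem exists_forall_ge_mem_truncIdeal {p : MvPolynomial (Fin n) ℝ}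
    (hp : p ∈ Ideal.span (Set.range h)) : ∃ N, ∀ k ≥ N, p ∈ truncIdeal h k := by
  obtain ⟨φ, rfl⟩ := (Submodule.mem_span_range_iff_exists_fun _).mp hp
  refine ⟨Finset.univ.sup fun i => (φ i * h i).totalDegree, fun k hk => ⟨φ, fun i => ?_, rfl⟩⟩
  have := Finset.le_sup (f := fun i => (φ i * h i).totalDegree) (Finset.mem_univ i)
  omega

theorem exists_forall_ge_sum_mem_truncQM {τ : Fin (m₂ + 1) → MvPolynomial (Fin n) ℝ}
    (hτ : ∀ i, IsSOS (τ i)) :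
    ∃ N, ∀ k ≥ N, ∑ i, τ i * (Fin.cons 1 g : Fin (m₂ + 1) → MvPolynomial (Fin n) ℝ) i ∈
      truncQM g k := by
  refine ⟨Finset.univ.sup fun i => (τ i * (Fin.cons 1 g : Fin (m₂ + 1) → _) i).totalDegree,
    fun k hk => ⟨τ, fun i => ⟨hτ i, ?_⟩, rfl⟩⟩
  have := Finset.le_sup (f := fun i => (τ i * (Fin.cons 1 g : Fin (m₂ + 1) → _) i).totalDegree)
    (Finset.mem_univ i)
  omega

end Truncation

theorem sos_relaxation_achieves_optimum_general
    {n m₁ m₂ : ℕ} (f : MvPolynomial (Fin n) ℝ)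
    (h : Fin m₁ → MvPolynomial (Fin n) ℝ) (g : Fin m₂ → MvPolynomial (Fin n) ℝ)
    (fm : ℝ)
    (hconv : ∃ N₀ : ℕ, ∀ k ≥ N₀, lasserreBound f h g k = (fm : EReal))
    (hI : (Ideal.span (Set.range h) : Set (MvPolynomial (Fin n) ℝ)) =
      vanishIdeal (feasSet h g)) :
    ∃ N : ℕ, ∀ k ≥ N, f - C fm ∈ truncIdeal h k + truncQM g k := by
  obtain ⟨N₀, hN₀⟩ := hconv
  obtain ⟨r, hr, hmem⟩ := exists_seq_tendsto_of_lasserreBound_eq (hN₀ N₀ le_rfl)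
  choose A hA B hB hAB using fun j => Set.mem_add.mp (hmem j)
  choose σ hσ hBσ using hB
  set g' : Fin (m₂ + 1) → MvPolynomial (Fin n) ℝ := Fin.cons 1 g
  have hg' : ∀ x ∈ feasSet h g, ∀ i, 0 ≤ eval x (g' i) := fun x hx =>
    Fin.cases (by simp [g']) fun i => by simpa [g'] using hx.2 i
  obtain ⟨τ, hτ, hτK⟩ := exists_isSOS_eval_eq_of_tendsto hg' hσ (F := fun x => eval x f - fm)
    fun x hx => by
      refine (tendsto_const_nhds.sub hr).congr fun j => ?_
      have := congrArg (eval x) (hAB j)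
      simp only [hBσ, map_add, map_sub, map_sum, map_mul, eval_C,
        eval_eq_zero_of_mem_truncIdeal (hA j) hx.1] at this
      linarith
  have hz : f - C fm - ∑ i, τ i * g' i ∈ Ideal.span (Set.range h) := by
    rw [← SetLike.mem_coe, hI]
    intro x hx
    simp [hτK x hx]
  obtain ⟨N₁, hN₁⟩ := exists_forall_ge_mem_truncIdeal hz
  obtain ⟨N₂, hN₂⟩ := exists_forall_ge_sum_mem_truncQM hτ
  exact ⟨max N₁ N₂, fun k hk => Set.mem_add.mpr ⟨_, hN₁ k (le_of_max_le_left hk), _,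
    hN₂ k (le_of_max_le_right hk), sub_add_cancel _ _⟩⟩

/-- If `f_min` is finite, Lasserre's hierarchy has finite convergence, and
`⟨h⟩ = I(K)`, then the SOS relaxation achieves its optimum for all big orders. -/
theorem sos_relaxation_achieves_optimum
    {n m₁ m₂ : ℕ} (f : MvPolynomial (Fin n) ℝ)
    (h : Fin m₁ → MvPolynomial (Fin n) ℝ) (g : Fin m₂ → MvPolynomial (Fin n) ℝ)
    (fm : ℝ) (hfm : IsGLB ((fun x => eval x f) '' feasSet h g) fm)
    (hconv : ∃ N₀ : ℕ, ∀ k ≥ N₀, lasserreBound f h g k = (fm : EReal))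
    (hI : (Ideal.span (Set.range h) : Set (MvPolynomial (Fin n) ℝ)) =
      vanishIdeal (feasSet h g)) :
    ∃ N : ℕ, ∀ k ≥ N, f - C fm ∈ truncIdeal h k + truncQM g k :=
  sos_relaxation_achieves_optimum_general f h g fm hconv hI
end

section
/- Let f ∈ ℝ[x₁,…,xₙ] and let h, g be tuples of polynomials with feasible set K nonempty. Suppose the real variety V_ℝ(h) is finite and let f_min = min_{x∈K} f(x). Then there exist N ∈ ℕ and a polynomial a ∈ Q_N(g) such that the polynomial f − f_min − a vanishes at every point of V_ℝ(h). -/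
open MvPolynomial Pointwise

/-- A separating polynomial: value 1 at `u`, value 0 at `v` (when `u ≠ v`). -/
noncomputable def sepPoly {n : ℕ} (u v : Fin n → ℝ) : MvPolynomial (Fin n) ℝ :=
  if h : ∃ i, u i ≠ v i then
    C (u h.choose - v h.choose)⁻¹ * (X h.choose - C (v h.choose)) else 1

lemma sepPoly_eval_self {n : ℕ} {u v : Fin n → ℝ} (huv : u ≠ v) :
    eval u (sepPoly u v) = 1 := by
  have hex : ∃ i, u i ≠ v i := Function.ne_iff.mp huv
  rw [sepPoly, dif_pos hex]
  simp only [map_mul, eval_C, map_sub, eval_X]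
  exact inv_mul_cancel₀ (sub_ne_zero.mpr hex.choose_spec)

lemma sepPoly_eval_other {n : ℕ} {u v : Fin n → ℝ} (huv : u ≠ v) :
    eval v (sepPoly u v) = 0 := by
  have hex : ∃ i, u i ≠ v i := Function.ne_iff.mp huv
  rw [sepPoly, dif_pos hex]
  simp

/-- Interpolation polynomial: value 1 at `u`, value 0 at other points of `S`. -/
noncomputable def interp_s11 {n : ℕ} (u : Fin n → ℝ) (S : Finset (Fin n → ℝ)) :
    MvPolynomial (Fin n) ℝ :=
  ∏ v ∈ S.erase u, sepPoly u v

lemma interp_eval_self {n : ℕ} (u : Fin n → ℝ) (S : Finset (Fin n → ℝ)) :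
    eval u (interp_s11 u S) = 1 := by
  rw [interp_s11, map_prod]
  refine Finset.prod_eq_one fun v hv => ?_
  exact sepPoly_eval_self ((Finset.mem_erase.mp hv).1.symm)

lemma interp_eval_other {n : ℕ} {u w : Fin n → ℝ} {S : Finset (Fin n → ℝ)}
    (hw : w ∈ S) (hwu : w ≠ u) : eval w (interp_s11 u S) = 0 := by
  rw [interp_s11, map_prod]
  exact Finset.prod_eq_zero (Finset.mem_erase.mpr ⟨hwu, hw⟩) (sepPoly_eval_other hwu.symm)

lemma isSOS_sum_sq_s11 {n : ℕ} {α : Type*} (s : Finset α) (q : α → MvPolynomial (Fin n) ℝ) :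
    IsSOS (∑ u ∈ s, q u ^ 2) := by
  refine ⟨s.card, fun i => q (s.equivFin.symm i), ?_⟩
  rw [← Finset.sum_coe_sort s (fun u => q u ^ 2)]
  exact (Equiv.sum_comp s.equivFin.symm (fun x : s => q x ^ 2)).symm

/-- If `K ≠ ∅` and `V_ℝ(h)` is finite, then there are `N` and `a ∈ Q_N(g)`
such that `f − f_min − a` vanishes on `V_ℝ(h)`. -/
theorem exists_quadratic_module_elem_vanishing_on_variety
    {n m₁ m₂ : ℕ} (f : MvPolynomial (Fin n) ℝ)
    (h : Fin m₁ → MvPolynomial (Fin n) ℝ) (g : Fin m₂ → MvPolynomial (Fin n) ℝ)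
    (hKne : (feasSet h g).Nonempty) (hfin : (realVariety h).Finite) :
    ∀ fm : ℝ, IsLeast ((fun x => eval x f) '' feasSet h g) fm →
      ∃ (N : ℕ) (a : MvPolynomial (Fin n) ℝ), a ∈ truncQM g N ∧
        ∀ u ∈ realVariety h, eval u (f - C fm - a) = 0 := by

  classical
  intro fm hfm
  set S : Finset (Fin n → ℝ) := hfin.toFinset with hSdef
  set d : (Fin n → ℝ) → ℝ := fun u => eval u f - fm with hd
  -- points of the variety where f - fm is negative must violate some g j
  have key : ∀ u ∈ realVariety h, d u < 0 → ∃ j, eval u (g j) < 0 := by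
    intro u hu hdu
    by_contra hc
    push_neg at hc
    have huK : u ∈ feasSet h g := ⟨hu, hc⟩
    have hle : fm ≤ eval u f := hfm.2 ⟨u, huK, rfl⟩
    simp only [hd] at hdu
    linarith
  -- a selection of a violated constraint
  set jsel : (Fin n → ℝ) → Option (Fin m₂) :=
    fun u => if hx : ∃ j, eval u (g j) < 0 then some hx.choose else none with hjsel
  -- coefficients
  set coef : (Fin n → ℝ) → Fin (m₂ + 1) → ℝ := fun u j =>
    Fin.cases (if 0 ≤ d u then Real.sqrt (d u) else 0)
      (fun j' => if d u < 0 ∧ jsel u = some j' then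
        Real.sqrt (d u / eval u (g j')) else 0) j with hcoef
  set σ : Fin (m₂ + 1) → MvPolynomial (Fin n) ℝ :=
    fun j => ∑ u ∈ S, (C (coef u j) * interp_s11 u S) ^ 2 with hσ
  set G : Fin (m₂ + 1) → MvPolynomial (Fin n) ℝ :=
    (Fin.cons 1 g : Fin (m₂ + 1) → MvPolynomial (Fin n) ℝ) with hG
  set a : MvPolynomial (Fin n) ℝ := ∑ j, σ j * G j with ha
  set N : ℕ := Finset.univ.sup (fun j => (σ j * G j).totalDegree) with hN
  refine ⟨N, a, ⟨σ, fun j => ⟨isSOS_sum_sq_s11 S _, ?_⟩, rfl⟩, ?_⟩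
  · have h1 : (σ j * G j).totalDegree ≤ N :=
      Finset.le_sup (f := fun j => (σ j * G j).totalDegree) (Finset.mem_univ j)
    rw [← hG]
    omega
  · -- evaluation of σ j at a point of S
    have evσ : ∀ (j : Fin (m₂ + 1)), ∀ u ∈ S, eval u (σ j) = (coef u j) ^ 2 := by
      intro j u hu
      rw [hσ]
      simp only [map_sum]
      rw [Finset.sum_eq_single u]
      · simp [interp_eval_self]
      · intro v hv hvu
        simp [interp_eval_other hu hvu.symm]
      · intro hcon; exact absurd hu hcon
    intro u hu
    have huS : u ∈ S := hfin.mem_toFinset.mpr hu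
    have heva : eval u a = d u := by
      rw [ha]
      simp only [map_sum, map_mul]
      have hrw : ∀ j, eval u (σ j) * eval u (G j) = (coef u j) ^ 2 * eval u (G j) := by
        intro j; rw [evσ j u huS]
      simp only [hrw]
      rw [Fin.sum_univ_succ]
      by_cases h0 : 0 ≤ d u
      · have hz : ∀ j' : Fin m₂, coef u j'.succ = 0 := by
          intro j'
          simp only [hcoef, Fin.cases_succ]
          rw [if_neg]
          rintro ⟨h1, -⟩; linarith
        have hc0 : coef u (0 : Fin (m₂ + 1)) = Real.sqrt (d u) := by
          simp only [hcoef, Fin.cases_zero, if_pos h0]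
        simp only [hz, hc0, hG, Fin.cons_zero]
        simp [Real.sq_sqrt h0]
      · push_neg at h0
        have hex : ∃ j, eval u (g j) < 0 := key u hu h0
        have hjs : jsel u = some hex.choose := by rw [hjsel]; exact dif_pos hex
        set j₀ : Fin m₂ := hex.choose with hj₀
        have hgneg : eval u (g j₀) < 0 := hex.choose_spec
        have hc0 : coef u (0 : Fin (m₂ + 1)) = 0 := by
          simp only [hcoef, Fin.cases_zero, if_neg (not_le.mpr h0)]
        have hterm : ∀ j' : Fin m₂,
            (coef u j'.succ) ^ 2 * eval u (G j'.succ)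
              = if j' = j₀ then d u else 0 := by
          intro j'
          by_cases hj : j' = j₀
          · subst hj
            have hcond : d u < 0 ∧ jsel u = some j₀ := ⟨h0, hjs⟩
            simp only [hcoef, Fin.cases_succ, if_pos hcond, hG, Fin.cons_succ, if_pos rfl]
            have hdiv : 0 ≤ d u / eval u (g j₀) :=
              le_of_lt (div_pos_of_neg_of_neg h0 hgneg)
            rw [Real.sq_sqrt hdiv, div_mul_cancel₀ _ (ne_of_lt hgneg)]
            simp
          · have hcond : ¬(d u < 0 ∧ jsel u = some j') := by
              rintro ⟨-, hj2⟩
              rw [hjs] at hj2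
              exact hj ((Option.some_injective _ hj2).symm ▸ rfl)
            simp only [hcoef, Fin.cases_succ, if_neg hcond, if_neg hj]
            ring
        rw [hc0]
        simp only [hterm]
        rw [Finset.sum_ite_eq' Finset.univ j₀ (fun _ => d u)]
        simp
    simp only [map_sub, eval_C, heva, hd]
    ring
end

section
/- Let n ≥ 1 and h = x₁² + x₂² + ⋯ + xₙ². For every ε > 0, the identity x₁ + ε = ε·(1 + x₁/(2ε))² + (1/(4ε))·(x₂² + ⋯ + xₙ²) − (1/(4ε))·h holds; consequently, for the problem of minimizing x₁ subject to h(x) = 0, the Lasserre bound satisfies f_k = sup{γ ∈ ℝ : x₁ − γ ∈ ⟨h⟩_{2k} + Σ_{2k}} = 0 = f_min for every k ≥ 1, but this supremum is not attained for any k (there is no SOS σ and polynomial φ with x₁ = σ + φ·h). -/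
open MvPolynomial Pointwise

/-- The set of SOS polynomials of degree at most `2k`. -/
def sigma2k {n : ℕ} (k : ℕ) : Set (MvPolynomial (Fin n) ℝ) :=
  {p | IsSOS p ∧ p.totalDegree ≤ 2 * k}

/-- The `k`-th Lasserre bound for minimizing `f` subject to `h = 0`
(no inequality constraints). -/
noncomputable def lasserreEqBound {n m : ℕ} (f : MvPolynomial (Fin n) ℝ)
    (h : Fin m → MvPolynomial (Fin n) ℝ) (k : ℕ) : EReal :=
  sSup {γ : EReal | ∃ r : ℝ, γ = (r : EReal) ∧ f - C r ∈ truncIdeal h k + sigma2k k}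

/-!
Weak duality gives `f_k ≤ f_min = 0`. Conversely `-ε` is feasible at every order `k ≥ 1`
for every `ε > 0`: the certificate
`x₁ + ε = ε (1 + x₁/(2ε))² + (x₂² + ⋯ + xₙ²)/(4ε) − h/(4ε)` has degree two.
The value is never attained: restricting `x₁ = σ + φ h` to the `x₁`-axis gives
`t = s(t) + p(t) t²` with `s` a sum of squares vanishing at `0`. Each square in `s`
then vanishes at `0`, so `t² ∣ s`, whence `t² ∣ t`, which is absurd.
-/

theorem IsSumSq.map {R S : Type*} [CommSemiring R] [CommSemiring S] (f : R →+* S) {s : R}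
    (hs : IsSumSq s) : IsSumSq (f s) := by
  induction hs with
  | zero => simp
  | sq_add a _ ih => simpa only [map_add, map_mul] using IsSumSq.sq_add (f a) ih

section SumsOfSquares

variable {n : ℕ}

theorem IsSOS.isSumSq {p : MvPolynomial (Fin n) ℝ} (hp : IsSOS p) : IsSumSq p := by
  obtain ⟨m, q, rfl⟩ := hp
  exact IsSumSq.sum_sq Finset.univ q

theorem IsSumSq.isSOS {p : MvPolynomial (Fin n) ℝ} (hp : IsSumSq p) : IsSOS p := by
  induction hp with
  | zero => exact ⟨0, Fin.elim0, by simp⟩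
  | sq_add a _ ih =>
    obtain ⟨m, q, rfl⟩ := ih
    exact ⟨m + 1, Fin.cons a q, by simp [Fin.sum_univ_succ, sq]⟩

theorem IsSOS.eval_nonneg {p : MvPolynomial (Fin n) ℝ} (hp : IsSOS p) (x : Fin n → ℝ) :
    0 ≤ eval x p :=
  (hp.isSumSq.map (eval x)).nonneg

theorem isSumSq_C {σ : Type*} {c : ℝ} (hc : 0 ≤ c) : IsSumSq (C c : MvPolynomial σ ℝ) := by
  simpa only [← C_mul, Real.mul_self_sqrt hc] using IsSumSq.mul_self (C √c : MvPolynomial σ ℝ)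

end SumsOfSquares

theorem Polynomial.X_sq_dvd_of_isSumSq {R : Type*} [CommRing R] [LinearOrder R]
    [IsStrictOrderedRing R] {s : Polynomial R} (hs : IsSumSq s) (h0 : s.eval 0 = 0) :
    X ^ 2 ∣ s := by
  induction hs with
  | zero => exact dvd_zero _
  | @sq_add a t ht ih =>
    rw [eval_add, eval_mul] at h0
    have ht0 : 0 ≤ t.eval 0 := (ht.map (evalRingHom 0)).nonneg
    obtain ⟨ha0, ht0⟩ := (add_eq_zero_iff_of_nonneg (mul_self_nonneg _) ht0).mp h0
    have hXa : X ∣ a := by rwa [X_dvd_iff, coeff_zero_eq_eval_zero, ← mul_self_eq_zero]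
    exact dvd_add (sq a ▸ pow_dvd_pow_of_dvd hXa 2) (ih ht0)

theorem Polynomial.X_ne_add_mul_X_sq_of_isSumSq {R : Type*} [CommRing R] [LinearOrder R]
    [IsStrictOrderedRing R] {s p : Polynomial R} (hs : IsSumSq s) :
    X ≠ s + p * X ^ 2 := by
  intro hX
  have hs0 : s.eval 0 = 0 := by simpa using (congrArg (eval 0) hX).symm
  have hdvd : (X : Polynomial R) ^ 2 ∣ X :=
    (dvd_add (X_sq_dvd_of_isSumSq hs hs0) (dvd_mul_left _ _)).trans hX.symm.dvd
  simpa using X_pow_dvd_iff.mp hdvd 1 one_lt_two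

section Degrees

variable {σ R : Type*} [CommSemiring R]

theorem MvPolynomial.totalDegree_C_mul_le (a : R) (p : MvPolynomial σ R) :
    (C a * p).totalDegree ≤ p.totalDegree :=
  (totalDegree_mul _ _).trans (by simp)

theorem MvPolynomial.totalDegree_sum_X_sq_le [Nontrivial R] (s : Finset σ) :
    (∑ j ∈ s, X j ^ 2 : MvPolynomial σ R).totalDegree ≤ 2 :=
  (totalDegree_finsetSum _ _).trans <| Finset.sup_le fun j _ => (totalDegree_X_pow j 2).le

end Degrees

theorem MvPolynomial.X_add_C_eq {σ : Type*} [Fintype σ] [DecidableEq σ] (i : σ) {ε : ℝ}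
    (hε : ε ≠ 0) :
    X i + C ε =
      C ε * (1 + C (1 / (2 * ε)) * X i) ^ 2 +
        C (1 / (4 * ε)) * (∑ j ∈ Finset.univ.erase i, X j ^ 2) -
        C (1 / (4 * ε)) * (∑ j, X j ^ 2) := by
  rw [← Finset.add_sum_erase _ _ (Finset.mem_univ i)]
  have h1 : 2 * (C ε * C (1 / (2 * ε)) : MvPolynomial σ ℝ) = 1 := by
    rw [← C_mul, ← map_ofNat C 2, ← C_mul, ← C_1]; congr 1; field_simp
  have h2 : (C ε * C (1 / (2 * ε)) ^ 2 : MvPolynomial σ ℝ) = C (1 / (4 * ε)) := by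
    rw [← C_pow, ← C_mul]; congr 1; field_simp; ring
  linear_combination (-X i) * h1 - X i ^ 2 * h2

theorem X_sub_C_neg_mem_truncIdeal_add_sigma2k {n k : ℕ} (hk : 1 ≤ k) (i : Fin n) {ε : ℝ}
    (hε : 0 < ε) :
    X i - C (-ε) ∈ truncIdeal (fun _ : Fin 1 => ∑ j : Fin n, X j ^ 2) k + sigma2k k := by
  have h2k : 2 ≤ 2 * k := by omega
  refine ⟨C (-(1 / (4 * ε))) * ∑ j, X j ^ 2, ?_,
    C ε * (1 + C (1 / (2 * ε)) * X i) ^ 2 + C (1 / (4 * ε)) * ∑ j ∈ Finset.univ.erase i, X j ^ 2,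
    ⟨?_, ?_⟩, ?_⟩
  · refine ⟨fun _ => C (-(1 / (4 * ε))), fun _ => ?_, by simp⟩
    grw [totalDegree_C_mul_le, totalDegree_sum_X_sq_le, h2k]
  · refine (IsSumSq.add (.mul (isSumSq_C hε.le) ?_) (.mul (isSumSq_C (by positivity)) ?_)).isSOS
    · exact (IsSquare.sq _).isSumSq
    · exact IsSumSq.sum_sq _ _
  · have hlin : (1 + C (1 / (2 * ε)) * X i : MvPolynomial (Fin n) ℝ).totalDegree ≤ 1 := by
      grw [totalDegree_add, totalDegree_one, totalDegree_C_mul_le, totalDegree_X]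
      simp
    grw [totalDegree_add, totalDegree_C_mul_le, totalDegree_C_mul_le, totalDegree_pow, hlin,
      totalDegree_sum_X_sq_le, h2k]
    simp
  · show _ + _ = X i - C (-ε)
    rw [map_neg C ε, sub_neg_eq_add, X_add_C_eq i hε.ne', map_neg]
    ring

theorem lasserreEqBound_le_fMin {n m : ℕ} (f : MvPolynomial (Fin n) ℝ)
    (h : Fin m → MvPolynomial (Fin n) ℝ) (k : ℕ) :
    lasserreEqBound f h k ≤ fMin f (realVariety h) := by
  refine sSup_le ?_
  rintro _ ⟨r, rfl, _, ⟨φ, -, rfl⟩, s, ⟨hs, -⟩, hfs⟩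
  refine le_iInf₂ fun x hx => ?_
  have hfx : eval x f - r = eval x s := by
    simpa [show ∀ i, eval x (h i) = 0 from hx] using congrArg (eval x) hfs.symm
  exact EReal.coe_le_coe_iff.mpr (by linarith [hs.eval_nonneg x])

theorem EReal.zero_le_sSup_of_forall_neg_mem {S : Set EReal}
    (hS : ∀ ε : ℝ, 0 < ε → ((-ε : ℝ) : EReal) ∈ S) : 0 ≤ sSup S := by
  refine le_of_forall_lt fun c hc => ?_
  obtain ⟨x, hcx, hx0⟩ := EReal.exists_between_coe_real hc
  exact hcx.trans_le (le_sSup (by simpa using hS (-x) (by simpa using hx0)))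

theorem zero_le_lasserreEqBound_X {n k : ℕ} (hk : 1 ≤ k) (i : Fin n) :
    0 ≤ lasserreEqBound (X i) (fun _ : Fin 1 => ∑ j : Fin n, X j ^ 2) k :=
  EReal.zero_le_sSup_of_forall_neg_mem fun _ hε =>
    ⟨_, rfl, X_sub_C_neg_mem_truncIdeal_add_sigma2k hk i hε⟩

theorem realVariety_sum_X_sq {n : ℕ} :
    realVariety (fun _ : Fin 1 => ∑ j : Fin n, X j ^ 2) = {0} := by
  ext x
  simp only [realVariety, Set.mem_ofPred_eq, map_sum, map_pow, eval_X, forall_const,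
    Finset.sum_eq_zero_iff_of_nonneg fun _ _ => sq_nonneg _]
  simp [funext_iff]

theorem not_exists_isSOS_X_eq_add_mul_sum_X_sq {n : ℕ} (i : Fin n) :
    ¬ ∃ σ φ : MvPolynomial (Fin n) ℝ, IsSOS σ ∧ X i = σ + φ * ∑ j, X j ^ 2 := by
  rintro ⟨σ, φ, hσ, hX⟩
  let ψ : MvPolynomial (Fin n) ℝ →ₐ[ℝ] Polynomial ℝ := aeval (Pi.single i Polynomial.X)
  have hψ : ψ (∑ j, X j ^ 2) = Polynomial.X ^ 2 := by
    rw [map_sum, Fintype.sum_eq_single i fun j hj => by simp [ψ, hj]]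
    simp [ψ]
  refine Polynomial.X_ne_add_mul_X_sq_of_isSumSq (hσ.isSumSq.map ψ.toRingHom) (p := ψ φ) ?_
  simpa [hψ, ψ] using congrArg ψ hX

/-- For minimizing `x₁` subject to `x₁² + ⋯ + xₙ² = 0`: the explicit ε-identity
holds, the Lasserre bound satisfies `f_k = 0 = f_min` for all `k ≥ 1`, yet the
supremum is never attained: there are no SOS `σ` and polynomial `φ` with
`x₁ = σ + φ·(x₁² + ⋯ + xₙ²)`. -/
theorem lasserre_value_attained_never {n : ℕ} (hn : 0 < n) :
    (∀ ε : ℝ, 0 < ε →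
      X ⟨0, hn⟩ + C ε =
        C ε * (1 + C (1 / (2 * ε)) * X ⟨0, hn⟩) ^ 2 +
          C (1 / (4 * ε)) * (∑ i ∈ Finset.univ.erase (⟨0, hn⟩ : Fin n), X i ^ 2) -
          C (1 / (4 * ε)) * (∑ i : Fin n, X i ^ 2)) ∧
    (∀ k : ℕ, 1 ≤ k →
      lasserreEqBound (X ⟨0, hn⟩) (fun _ : Fin 1 => ∑ i : Fin n, X i ^ 2) k
        = (0 : EReal)) ∧
    fMin (X ⟨0, hn⟩) (realVariety (fun _ : Fin 1 => ∑ i : Fin n, X i ^ 2)) = (0 : EReal) ∧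
    ¬ ∃ (σ φ : MvPolynomial (Fin n) ℝ), IsSOS σ ∧
        X ⟨0, hn⟩ = σ + φ * (∑ i : Fin n, X i ^ 2) := by
  have hfMin : fMin (X ⟨0, hn⟩) (realVariety (fun _ : Fin 1 => ∑ i : Fin n, X i ^ 2)) = 0 := by
    simp [fMin, realVariety_sum_X_sq]
  refine ⟨fun ε hε => X_add_C_eq _ hε.ne', fun k hk => ?_, hfMin,
    not_exists_isSOS_X_eq_add_mul_sum_X_sq _⟩
  exact le_antisymm ((lasserreEqBound_le_fMin _ _ k).trans_eq hfMin)
    (zero_le_lasserreEqBound_X hk _)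
end

section
/- There do not exist sum-of-squares polynomials σ₀, σ₁ ∈ ℝ[x] (univariate) such that 1 − x² = σ₀ + σ₁·(1 − x²)³. In particular, for the problem of minimizing 1 − x² over {x ∈ ℝ : (1 − x²)³ ≥ 0}, the value γ = f_min = 0 is infeasible for Lasserre's relaxation at every order, even though the minimum f_min = 0 is attained. -/
open Polynomial

lemma sos_sq_dvd {p : Polynomial ℝ} (hp : IsSOSPoly p) (hroot : p.eval 1 = 0) :
    (X - C 1) ^ 2 ∣ p := by
  obtain ⟨m, q, rfl⟩ := hp
  have h0 : ∑ i, (q i).eval 1 ^ 2 = 0 := by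
    simpa [eval_finset_sum] using hroot
  have hz : ∀ i ∈ Finset.univ, (q i).eval 1 ^ 2 = 0 :=
    (Finset.sum_eq_zero_iff_of_nonneg (fun i _ => sq_nonneg _)).mp h0
  refine Finset.dvd_sum fun i _ => ?_
  have : (X - C (1 : ℝ)) ∣ q i := by
    rw [dvd_iff_isRoot]
    have := hz i (Finset.mem_univ i)
    exact pow_eq_zero_iff (n := 2) (by norm_num) |>.mp this
  exact pow_dvd_pow_of_dvd this 2

/-- There are no SOS polynomials `σ₀, σ₁` with `1 − x² = σ₀ + σ₁·(1 − x²)³`;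
in particular `γ = f_min = 0` is infeasible for Lasserre's relaxation of
minimizing `1 − x²` over `{x : (1 − x²)³ ≥ 0}` at every order, even though
the minimum `f_min = 0` is attained. -/
theorem no_sos_certificate_for_cubed_constraint :
    (¬ ∃ σ₀ σ₁ : Polynomial ℝ, IsSOSPoly σ₀ ∧ IsSOSPoly σ₁ ∧
        1 - X ^ 2 = σ₀ + σ₁ * (1 - X ^ 2) ^ 3) ∧
    IsLeast ((fun x : ℝ => 1 - x ^ 2) '' {x : ℝ | 0 ≤ (1 - x ^ 2) ^ 3}) 0 := by
  constructor
  · rintro ⟨σ₀, σ₁, h₀, h₁, heq⟩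
    -- evaluate at 1
    have heval : σ₀.eval 1 = 0 := by
      have := congrArg (eval 1) heq
      simp at this
      linarith
    have hd0 : (X - C (1:ℝ)) ^ 2 ∣ σ₀ := sos_sq_dvd h₀ heval
    have hdg : (X - C (1:ℝ)) ∣ (1 - X ^ 2 : Polynomial ℝ) := by
      rw [dvd_iff_isRoot]; simp [IsRoot]
    have hd1 : (X - C (1:ℝ)) ^ 2 ∣ σ₁ * (1 - X ^ 2) ^ 3 := by
      have : (X - C (1:ℝ)) ^ 2 ∣ (1 - X ^ 2 : Polynomial ℝ) ^ 3 :=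
        (pow_dvd_pow_of_dvd hdg 2).trans (pow_dvd_pow _ (by norm_num))
      exact this.mul_left σ₁
    have hdvd : (X - C (1:ℝ)) ^ 2 ∣ (1 - X ^ 2 : Polynomial ℝ) := by
      rw [heq]; exact dvd_add hd0 hd1
    obtain ⟨c, hc⟩ := hdvd
    have := congrArg (fun p => (derivative p).eval 1) hc
    simp [derivative_mul, derivative_pow] at this
  · constructor
    · exact ⟨1, by norm_num, by norm_num⟩
    · rintro y ⟨x, hx, rfl⟩
      simp only [Set.mem_setOf_eq] at hx
      have h : (0:ℝ) ≤ 1 - x ^ 2 := (Odd.pow_nonneg_iff (by decide : Odd 3)).mp hx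
      simpa using h
end
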